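/- Let F : P_2(ℝ^d) → ℝ have intrinsic derivative D_m F satisfying |D_m F(m,x) − D_m F(m',x')| ≤ M_{mm} W_1(m,m') + M_{mx}|x−x'| for all m, m' ∈ P_2(ℝ^d) and x, x' ∈ ℝ^d. Define U^N(x) = N F(μ_x) for x ∈ (ℝ^d)^N, so that ∇_i U^N(x) = D_m F(μ_x, x^i). Then the full gradient ∇U^N : ℝ^{dN} → ℝ^{dN} is Lipschitz with constant M_{mx} + M_{mm}: |∇U^N(x) − ∇U^N(x')| ≤ (M_{mx} + M_{mm})|x − x'| for all x, x' ∈ ℝ^{dN}, with Euclidean norms. -/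

import Mathlib

open MeasureTheory
open scoped ENNReal

noncomputable section

abbrev Euc (d : ℕ) := EuclideanSpace ℝ (Fin d)

/-- The `L¹`-Wasserstein distance between measures on `ℝ^d`. -/
noncomputable def W1 {d : ℕ} (μ ν : Measure (Euc d)) : ℝ≥0∞ :=
  ⨅ π ∈ {π : Measure (Euc d × Euc d) | π.map Prod.fst = μ ∧ π.map Prod.snd = ν},
    ∫⁻ p, edist p.1 p.2 ∂π

/-- Empirical measure of `N` points. -/
noncomputable def emp {d N : ℕ} (x : Fin N → Euc d) : Measure (Euc d) :=
  (N : ℝ≥0∞)⁻¹ • ∑ i, Measure.dirac (x i)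

/-! Coupling `x i` with `x' i` gives `W₁(μ_x, μ_x') ≤ (1/N) ∑ |x i - x' i| ≤ |x - x'| / √N`
(Cauchy–Schwarz). Hence `|∇_i U^N(x) - ∇_i U^N(x')| ≤ M_mx |x i - x' i| + M_mm W₁(μ_x, μ_x')`,
and Minkowski's inequality in `ℝ^N` bounds the `ℓ²` norm of the right-hand side by
`(M_mx + M_mm) |x - x'|`. This needs `M_mx, M_mm ≥ 0`, which follows by testing the hypothesis on
Dirac masses. -/

theorem mul_sqrt_card_le_sqrt_sum_sq {ι : Type*} [Fintype ι] {a : ι → ℝ} {c : ℝ}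
    (hc : 0 ≤ c) (hca : c * Fintype.card ι ≤ ∑ i, a i) :
    c * √(Fintype.card ι) ≤ √(∑ i, a i ^ 2) := by
  have hcs : (∑ i, a i) ^ 2 ≤ Fintype.card ι * ∑ i, a i ^ 2 := sq_sum_le_card_mul_sum_sq
  rw [← Real.sqrt_sq hc, ← Real.sqrt_mul (sq_nonneg c)]
  refine Real.sqrt_le_sqrt ?_
  rcases (Nat.cast_nonneg (α := ℝ) (Fintype.card ι)).eq_or_lt with hn | hn
  · rw [← hn, mul_zero]; positivity
  · refine le_of_mul_le_mul_left ?_ hn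
    nlinarith [mul_nonneg hc hn.le]

theorem sqrt_sum_sq_le_of_le_mul_add_mul {ι : Type*} [Fintype ι] {a b : ι → ℝ} {α β c : ℝ}
    (hα : 0 ≤ α) (hβ : 0 ≤ β) (hc : 0 ≤ c) (hca : c * Fintype.card ι ≤ ∑ i, a i)
    (hb₀ : ∀ i, 0 ≤ b i) (hb : ∀ i, b i ≤ α * a i + β * c) :
    √(∑ i, b i ^ 2) ≤ (α + β) * √(∑ i, a i ^ 2) := by
  have norm_toLp (f : ι → ℝ) : ‖(WithLp.toLp 2 f : EuclideanSpace ℝ ι)‖ = √(∑ i, f i ^ 2) := by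
    simp [EuclideanSpace.norm_eq]
  set A : EuclideanSpace ℝ ι := WithLp.toLp 2 a
  set one : EuclideanSpace ℝ ι := WithLp.toLp 2 fun _ => 1
  have hone : ‖one‖ = √(Fintype.card ι) := by simp [one, norm_toLp]
  calc √(∑ i, b i ^ 2) ≤ √(∑ i, (α * a i + β * c) ^ 2) :=
        Real.sqrt_le_sqrt <| Finset.sum_le_sum fun i _ => pow_le_pow_left₀ (hb₀ i) (hb i) 2
    _ = ‖α • A + (β * c) • one‖ := by rw [← norm_toLp]; congr 1; ext i; simp [A, one]
    _ ≤ α * ‖A‖ + β * (c * √(Fintype.card ι)) := by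
        grw [norm_add_le, norm_smul, norm_smul, hone]
        simp [abs_of_nonneg, hα, hβ, hc, mul_assoc]
    _ ≤ α * ‖A‖ + β * ‖A‖ := by
        grw [mul_sqrt_card_le_sqrt_sum_sq hc hca, norm_toLp]
    _ = (α + β) * √(∑ i, a i ^ 2) := by rw [norm_toLp]; ring

theorem nonneg_of_norm_sub_le_mul_dist_add {X E : Type*} [MetricSpace X] [Nontrivial X]
    [SeminormedAddCommGroup E] {G : X → X → E} {A B : ℝ}
    (hG : ∀ a b x x' : X, ‖G a x - G b x'‖ ≤ A * dist a b + B * dist x x') : 0 ≤ A ∧ 0 ≤ B := by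
  obtain ⟨p, q, hpq⟩ := exists_pair_ne X
  have hpq : 0 < dist p q := dist_pos.2 hpq
  constructor
  · refine nonneg_of_mul_nonneg_left ?_ hpq
    simpa using (norm_nonneg _).trans (hG p q p p)
  · refine nonneg_of_mul_nonneg_left ?_ hpq
    simpa using (norm_nonneg _).trans (hG p p p q)

section Wasserstein

variable {d : ℕ}

theorem W1_le_lintegral_edist {μ ν : Measure (Euc d)} {π : Measure (Euc d × Euc d)}
    (h₁ : π.map Prod.fst = μ) (h₂ : π.map Prod.snd = ν) : W1 μ ν ≤ ∫⁻ p, edist p.1 p.2 ∂π :=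
  iInf₂_le π ⟨h₁, h₂⟩

theorem W1_dirac_dirac (a b : Euc d) : W1 (Measure.dirac a) (Measure.dirac b) = edist a b := by
  have hmeas : Measurable fun p : Euc d × Euc d => edist p.1 p.2 :=
    measurable_fst.edist measurable_snd
  refine le_antisymm ?_ (le_iInf₂ fun π ⟨h₁, h₂⟩ => ?_)
  · simpa [lintegral_dirac' _ hmeas] using W1_le_lintegral_edist
      (Measure.map_dirac' measurable_fst (a, b)) (Measure.map_dirac' measurable_snd (a, b))
  have ha : ∀ᵐ p ∂π, a = p.1 :=
    ae_of_ae_map measurable_fst.aemeasurable <| by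
      rw [h₁, ae_dirac_eq]; exact Filter.eventually_pure.2 rfl
  have hb : ∀ᵐ p ∂π, b = p.2 :=
    ae_of_ae_map measurable_snd.aemeasurable <| by
      rw [h₂, ae_dirac_eq]; exact Filter.eventually_pure.2 rfl
  have hπ : π Set.univ = 1 := by
    simpa [Measure.map_apply measurable_fst MeasurableSet.univ] using congrArg (· Set.univ) h₁
  refine le_of_eq ?_
  calc edist a b = ∫⁻ _, edist a b ∂π := by rw [lintegral_const, hπ, mul_one]
    _ = ∫⁻ p, edist p.1 p.2 ∂π := lintegral_congr_ae <| by
        filter_upwards [ha, hb] with p hpa hpb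
        rw [← hpa, ← hpb]

variable {N : ℕ}

theorem isProbabilityMeasure_emp (hN : 0 < N) (x : Fin N → Euc d) :
    IsProbabilityMeasure (emp x) := by
  constructor
  simp [emp, ENNReal.inv_mul_cancel (Nat.cast_ne_zero.2 hN.ne') (ENNReal.natCast_ne_top N)]

theorem integrable_emp {E : Type*} [NormedAddCommGroup E] (hN : 0 < N) (f : Euc d → E)
    (x : Fin N → Euc d) : Integrable f (emp x) :=
  (integrable_finsetSum_measure.2 fun _ _ => integrable_dirac enorm_lt_top).smul_measure
    (ENNReal.inv_ne_top.2 (Nat.cast_ne_zero.2 hN.ne'))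

theorem W1_emp_le (x x' : Fin N → Euc d) :
    W1 (emp x) (emp x') ≤ (N : ℝ≥0∞)⁻¹ * ∑ i, edist (x i) (x' i) := by
  have hmap {f : Euc d × Euc d → Euc d} (hf : Measurable f) :
      ((N : ℝ≥0∞)⁻¹ • ∑ i, Measure.dirac (x i, x' i)).map f =
        (N : ℝ≥0∞)⁻¹ • ∑ i, Measure.dirac (f (x i, x' i)) := by
    simp [Measure.map_smul, Measure.map_finset_sum' hf.aemeasurable, Measure.map_dirac' hf]
  refine (W1_le_lintegral_edist (hmap measurable_fst) (hmap measurable_snd)).trans_eq ?_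
  simp [lintegral_dirac' _ (measurable_fst.edist measurable_snd)]

theorem W1_emp_toReal_mul_le (x x' : Fin N → Euc d) :
    (W1 (emp x) (emp x')).toReal * N ≤ ∑ i, ‖x i - x' i‖ := by
  rcases Nat.eq_zero_or_pos N with rfl | hN
  · simp
  have hfin : (N : ℝ≥0∞)⁻¹ * ∑ i, edist (x i) (x' i) ≠ ∞ :=
    ENNReal.mul_ne_top (ENNReal.inv_ne_top.2 (by positivity))
      (ENNReal.sum_ne_top.2 fun _ _ => edist_ne_top _ _)
  calc (W1 (emp x) (emp x')).toReal * N
      ≤ ((N : ℝ≥0∞)⁻¹ * ∑ i, edist (x i) (x' i)).toReal * N :=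
        mul_le_mul_of_nonneg_right (ENNReal.toReal_mono hfin (W1_emp_le x x')) N.cast_nonneg
    _ = ∑ i, ‖x i - x' i‖ := by
        simp [ENNReal.toReal_sum, edist_ne_top, ← dist_edist, dist_eq_norm]
        field_simp

end Wasserstein

theorem gradUN_lipschitz_general {d N : ℕ} (hN : 0 < N)
    (DmF : Measure (Euc d) → Euc d → Euc d) (Mmm Mmx : ℝ)
    (hLip : ∀ (m m' : Measure (Euc d)), IsProbabilityMeasure m → IsProbabilityMeasure m' →
      Integrable (fun x : Euc d => ‖x‖ ^ 2) m → Integrable (fun x : Euc d => ‖x‖ ^ 2) m' →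
      ∀ x x' : Euc d, ‖DmF m x - DmF m' x'‖ ≤ Mmm * (W1 m m').toReal + Mmx * ‖x - x'‖)
    (gradUN : (Fin N → Euc d) → Fin N → Euc d)
    (hgrad : ∀ x i, gradUN x i = DmF (emp x) (x i)) :
    ∀ x x' : Fin N → Euc d,
      Real.sqrt (∑ i, ‖gradUN x i - gradUN x' i‖ ^ 2) ≤
        (Mmx + Mmm) * Real.sqrt (∑ i, ‖x i - x' i‖ ^ 2) := by
  intro x x'
  rcases Nat.eq_zero_or_pos d with rfl | hd
  -- for `d = 0` the constants need not be nonnegative, but both sides vanish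
  · simp [Subsingleton.elim _ (0 : Euc 0)]
  have : Nonempty (Fin d) := ⟨⟨0, hd⟩⟩
  obtain ⟨hMmm, hMmx⟩ := nonneg_of_norm_sub_le_mul_dist_add (G := fun a => DmF (Measure.dirac a))
    fun a b y y' => by
      simpa [W1_dirac_dirac, ← dist_edist, dist_eq_norm] using
        hLip _ _ inferInstance inferInstance (integrable_dirac enorm_lt_top)
          (integrable_dirac enorm_lt_top) y y'
  refine sqrt_sum_sq_le_of_le_mul_add_mul hMmx hMmm ENNReal.toReal_nonneg
    (by simpa using W1_emp_toReal_mul_le x x') (fun _ => norm_nonneg _) fun i => ?_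
  rw [hgrad, hgrad, add_comm]
  exact hLip _ _ (isProbabilityMeasure_emp hN x) (isProbabilityMeasure_emp hN x')
    (integrable_emp hN _ x) (integrable_emp hN _ x') (x i) (x' i)

/-- **Uniform-in-`N` Lipschitz bound for `∇U^N`.**
If `D_m F` is jointly Lipschitz, `|D_m F(m,x) − D_m F(m',x')| ≤ M_{mm} W₁(m,m') + M_{mx}|x−x'|`,
and `U^N(x) = N F(μ_x)` has gradient `∇_i U^N(x) = D_m F(μ_x, x^i)`, then `∇U^N` is
`(M_{mx} + M_{mm})`-Lipschitz on `ℝ^{dN}` with Euclidean norms. -/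
theorem gradUN_lipschitz {d N : ℕ} (hN : 0 < N) (F : Measure (Euc d) → ℝ)
    (DmF : Measure (Euc d) → Euc d → Euc d) (Mmm Mmx : ℝ)
    (hLip : ∀ (m m' : Measure (Euc d)), IsProbabilityMeasure m → IsProbabilityMeasure m' →
      Integrable (fun x : Euc d => ‖x‖ ^ 2) m → Integrable (fun x : Euc d => ‖x‖ ^ 2) m' →
      ∀ x x' : Euc d, ‖DmF m x - DmF m' x'‖ ≤ Mmm * (W1 m m').toReal + Mmx * ‖x - x'‖)
    (gradUN : (Fin N → Euc d) → Fin N → Euc d)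
    (hgrad : ∀ x i, gradUN x i = DmF (emp x) (x i)) :
    ∀ x x' : Fin N → Euc d,
      Real.sqrt (∑ i, ‖gradUN x i - gradUN x' i‖ ^ 2) ≤
        (Mmx + Mmm) * Real.sqrt (∑ i, ‖x i - x' i‖ ^ 2) :=
  gradUN_lipschitz_general hN DmF Mmm Mmx hLip gradUN hgrad

end
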